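/- Let n ≥ 1 and let A, B ∈ Mₙ(ℂ) satisfy A†A + BᵗB̄ = 1, A†B = BᵗĀ, AA† + BB† = 1, and ABᵗ = BAᵗ (equivalently, the 2n×2n block matrix [[A, B],[−B̄, Ā]] lies in the compact symplectic group Sp(n) = Sp(2n,ℂ) ∩ U(2n)). Let Λ be a real diagonal n×n matrix whose diagonal entries λ̃ᵢ all satisfy −1/2 < λ̃ᵢ < 1/2, and assume AA† = (1/2)·1 + Λ. Then there exists an n×n complex unitary matrix k with kΛ = Λk such that ABᵗ = k·D·kᵗ, where D is the real diagonal matrix with entries √(1/4 − λ̃ᵢ²). -/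

import Mathlib

/-!
Set `Ω = ABᵗ`. The symplectic relations make `Ω` symmetric, make it commute with `AA† = 1/2 + Λ`
(hence with `Λ` and with `D = diag √(1/4 − λᵢ²)`), and give `ΩΩ† = AA† − (AA†)² = D²`. Thus
`S = D⁻¹Ω` is a symmetric unitary matrix commuting with `Λ`. Since `S` is normal with finite
spectrum on the unit circle, the continuous functional calculus gives a unitary square root `k`
of `S` that is a polynomial in `S`; being a polynomial in `S`, it is symmetric and commutes with
`Λ` and `D`. Hence `Ω = D k kᵗ = k D kᵗ`.
-/

open Matrix Polynomial

theorem Lagrange.exists_eval_eqOn {F : Type*} [Field F] {s : Set F} (hs : s.Finite) (f : F → F) :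
    ∃ p : F[X], s.EqOn (fun x => p.eval x) f := by
  classical
  refine ⟨Lagrange.interpolate hs.toFinset id f, fun x hx => ?_⟩
  simpa using Lagrange.eval_interpolate_at_node f (Set.injOn_id _) (hs.mem_toFinset.2 hx)

theorem Commute.aeval_right {R A : Type*} [CommSemiring R] [Semiring A] [Algebra R A] {a b : A}
    (h : Commute a b) (p : R[X]) : Commute a (aeval b p) := by
  induction p using Polynomial.induction_on' with
  | add p q hp hq => simpa using hp.add_right hq
  | monomial k c =>
    simpa [aeval_monomial] using (Algebra.commute_algebraMap_right c a).mul_right (h.pow_right k)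

theorem Matrix.transpose_aeval {n R : Type*} [Fintype n] [DecidableEq n] [CommSemiring R]
    (M : Matrix n n R) (p : R[X]) : (aeval M p)ᵀ = aeval Mᵀ p := by
  induction p using Polynomial.induction_on' with
  | add p q hp hq => simp [hp, hq]
  | monomial k c => simp [aeval_monomial, transpose_pow, Algebra.algebraMap_eq_smul_one]

theorem Matrix.commute_diagonal_of_commute_diagonal {n R : Type*} [DecidableEq n] [Fintype n]
    [CommRing R] [NoZeroDivisors R] {v w : n → R} {M : Matrix n n R}
    (h : Commute (diagonal v) M) (hw : ∀ i j, v i = v j → w i = w j) :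
    Commute (diagonal w) M := by
  ext i j
  have hij := congr_fun₂ h.eq i j
  simp only [diagonal_mul, mul_diagonal] at hij ⊢
  by_cases hv : v i = v j
  · rw [hw i j hv, mul_comm]
  · have : (v i - v j) * M i j = 0 := by linear_combination hij
    simp [(mul_eq_zero.mp this).resolve_left (sub_ne_zero.mpr hv)]

theorem exists_polynomial_unitary_sq_eq {A : Type*} [TopologicalSpace A] [Ring A] [StarRing A]
    [Algebra ℂ A] [ContinuousFunctionalCalculus ℂ A IsStarNormal] {u : A}
    (hu : u ∈ unitary A) (hfin : (spectrum ℂ u).Finite) :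
    ∃ p : ℂ[X], aeval u p ∈ unitary A ∧ aeval u p ^ 2 = u := by
  obtain ⟨hnormal, hcircle⟩ := unitary_iff_isStarNormal_and_spectrum_subset_unitary.mp hu
  obtain ⟨p, hp⟩ := Lagrange.exists_eval_eqOn hfin (fun z : ℂ => z ^ (2⁻¹ : ℂ))
  have hcfc : cfc (fun z : ℂ => z ^ (2⁻¹ : ℂ)) u = aeval u p := by
    rw [← cfc_polynomial p u, cfc_congr hp.symm]
  have hcont : ContinuousOn (fun z : ℂ => z ^ (2⁻¹ : ℂ)) (spectrum ℂ u) := hfin.continuousOn _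
  refine ⟨p, ?_, ?_⟩
  · rw [← hcfc, cfc_unitary_iff _ _ hnormal hcont]
    intro z hz
    have hsq : (z ^ (2⁻¹ : ℂ)) ^ 2 = z := Complex.cpow_ofNat_inv_pow z 2
    have hz : ‖z‖ = 1 := CStarRing.norm_of_mem_unitary (hcircle hz)
    have hnorm : ‖z ^ (2⁻¹ : ℂ)‖ = 1 := by
      rw [← hsq, norm_pow] at hz
      exact (pow_eq_one_iff_of_nonneg (norm_nonneg _) two_ne_zero).mp hz
    rw [Complex.star_def, Complex.conj_mul', hnorm]
    norm_num
  · rw [← hcfc, ← cfc_pow _ _ _ hcont]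
    exact (cfc_congr fun z _ => Complex.cpow_ofNat_inv_pow z 2).trans (cfc_id' ℂ u)

section Takagi

variable {n : Type*} [Fintype n] [DecidableEq n]

open scoped Matrix.Norms.L2Operator in
theorem Matrix.exists_unitary_commute_mul_transpose_eq {S X : Matrix n n ℂ}
    (hS : S ∈ unitary (Matrix n n ℂ)) (hST : Sᵀ = S) (hXS : Commute X S) :
    ∃ k ∈ unitary (Matrix n n ℂ), Commute X k ∧ k * kᵀ = S := by
  obtain ⟨p, hpu, hp2⟩ := exists_polynomial_unitary_sq_eq hS (Matrix.finite_spectrum S)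
  refine ⟨aeval S p, hpu, hXS.aeval_right p, ?_⟩
  rw [transpose_aeval, hST, ← sq, hp2]

theorem Matrix.exists_unitary_commute_eq_mul_diagonal_mul_transpose {Ω : Matrix n n ℂ}
    {x : n → ℂ} {d : n → ℝ} (hd : ∀ i, d i ≠ 0) (hdx : ∀ i j, x i = x j → d i = d j)
    (hΩT : Ωᵀ = Ω) (hxΩ : Commute (diagonal x) Ω)
    (hΩΩ : Ω * Ωᴴ = diagonal fun i => (d i : ℂ) ^ 2) :
    ∃ k ∈ unitary (Matrix n n ℂ),
      Commute (diagonal x) k ∧ Ω = k * diagonal (fun i => (d i : ℂ)) * kᵀ := by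
  set D := diagonal fun i => (d i : ℂ)
  set Dinv := diagonal fun i => (d i : ℂ)⁻¹
  have hDinvΩ : Commute Dinv Ω :=
    commute_diagonal_of_commute_diagonal hxΩ fun i j h => by rw [hdx i j h]
  have hS : Dinv * Ω ∈ unitary (Matrix n n ℂ) := by
    rw [← Matrix.unitaryGroup, mem_unitaryGroup_iff, star_eq_conjTranspose, conjTranspose_mul,
      diagonal_conjTranspose, ← Matrix.mul_assoc, Matrix.mul_assoc _ Ω, hΩΩ,
      diagonal_mul_diagonal, diagonal_mul_diagonal, ← diagonal_one]
    refine congrArg diagonal (funext fun i => ?_)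
    simp only [Pi.star_apply, star_inv₀, Complex.star_def, Complex.conj_ofReal]
    field_simp [hd i]
  have hST : (Dinv * Ω)ᵀ = Dinv * Ω := by
    rw [transpose_mul, diagonal_transpose, hΩT]
    exact hDinvΩ.eq.symm
  obtain ⟨k, hk, hxk, hkk⟩ :=
    exists_unitary_commute_mul_transpose_eq hS hST ((commute_diagonal _ _).mul_right hxΩ)
  have hDk : Commute D k := commute_diagonal_of_commute_diagonal hxk fun i j h => by rw [hdx i j h]
  have hDDinv : D * Dinv = 1 := by
    rw [diagonal_mul_diagonal, ← diagonal_one]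
    exact congrArg diagonal (funext fun i => mul_inv_cancel₀ (Complex.ofReal_ne_zero.mpr (hd i)))
  refine ⟨k, hk, hxk, ?_⟩
  calc Ω = D * (Dinv * Ω) := by rw [← Matrix.mul_assoc, hDDinv, Matrix.one_mul]
    _ = k * D * kᵀ := by rw [← hkk, ← Matrix.mul_assoc, hDk.eq]

end Takagi

section Symplectic

variable {n : Type*} [Fintype n] {A B : Matrix n n ℂ}

theorem commute_mul_conjTranspose_mul_transpose
    (h2 : Aᴴ * B = Bᵀ * A.map (starRingEnd ℂ)) (h4 : A * Bᵀ = B * Aᵀ)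
    (hreal : (A * Aᴴ).map (starRingEnd ℂ) = A * Aᴴ) : Commute (A * Aᴴ) (A * Bᵀ) := by
  have hconj : (A * Aᴴ).map (starRingEnd ℂ) = A.map (starRingEnd ℂ) * Aᵀ := by
    rw [Matrix.map_mul]
    congr 1
    ext i j
    simp
  calc A * Aᴴ * (A * Bᵀ) = A * (Aᴴ * B) * Aᵀ := by rw [h4]; simp only [Matrix.mul_assoc]
    _ = A * Bᵀ * (A.map (starRingEnd ℂ) * Aᵀ) := by rw [h2]; simp only [Matrix.mul_assoc]
    _ = A * Bᵀ * (A * Aᴴ) := by rw [← hconj, hreal]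

theorem mul_transpose_mul_conjTranspose_eq_sub [DecidableEq n]
    (h1 : Aᴴ * A + Bᵀ * B.map (starRingEnd ℂ) = 1) :
    A * Bᵀ * (A * Bᵀ)ᴴ = A * Aᴴ - A * Aᴴ * (A * Aᴴ) := by
  have hB : (Bᵀ)ᴴ = B.map (starRingEnd ℂ) := by
    ext i j
    simp
  calc A * Bᵀ * (A * Bᵀ)ᴴ = A * (Bᵀ * B.map (starRingEnd ℂ)) * Aᴴ := by
        rw [conjTranspose_mul, hB]; simp only [Matrix.mul_assoc]
    _ = A * Aᴴ - A * Aᴴ * (A * Aᴴ) := by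
        rw [eq_sub_of_add_eq' h1]
        simp only [Matrix.mul_sub, Matrix.sub_mul, Matrix.mul_one, Matrix.mul_assoc]

end Symplectic

theorem stmt_9_general (n : ℕ) (A B : Matrix (Fin n) (Fin n) ℂ)
    (h1 : Aᴴ * A + Bᵀ * B.map (starRingEnd ℂ) = 1)
    (h2 : Aᴴ * B = Bᵀ * A.map (starRingEnd ℂ))
    (h4 : A * Bᵀ = B * Aᵀ)
    (l : Fin n → ℝ) (hl : ∀ i, -(1/2) < l i ∧ l i < 1/2)
    (hAA : A * Aᴴ = (1/2 : ℂ) • 1 + Matrix.diagonal (fun i => (l i : ℂ))) :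
    ∃ k : Matrix (Fin n) (Fin n) ℂ,
      kᴴ * k = 1 ∧
      k * Matrix.diagonal (fun i => (l i : ℂ)) =
        Matrix.diagonal (fun i => (l i : ℂ)) * k ∧
      A * Bᵀ = k * Matrix.diagonal (fun i => (Real.sqrt (1/4 - (l i) ^ 2) : ℂ)) * kᵀ := by
  have hpos : ∀ i, 0 < 1/4 - l i ^ 2 := fun i => by nlinarith [hl i]
  have hM : A * Aᴴ = diagonal fun i => ((1/2 + l i : ℝ) : ℂ) := by
    rw [hAA, smul_one_eq_diagonal, diagonal_add]
    congr 1; ext i; simp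
  have hMΩ := commute_mul_conjTranspose_mul_transpose h2 h4 (by
    rw [hM, diagonal_map (map_zero _)]
    simp only [Complex.conj_ofReal])
  rw [hM] at hMΩ
  obtain ⟨k, hk, hΛk, hΩ⟩ := exists_unitary_commute_eq_mul_diagonal_mul_transpose
    (x := fun i => (l i : ℂ)) (d := fun i => √(1/4 - l i ^ 2))
    (fun i => (Real.sqrt_pos.mpr (hpos i)).ne') (fun i j h => by rw [Complex.ofReal_inj.mp h])
    (by rw [transpose_mul, transpose_transpose, h4])
    (commute_diagonal_of_commute_diagonal hMΩ fun i j h => by simpa using h)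
    (by
      rw [mul_transpose_mul_conjTranspose_eq_sub h1, hM, diagonal_mul_diagonal, diagonal_sub]
      refine congrArg diagonal (funext fun i => ?_)
      rw [← Complex.ofReal_pow, Real.sq_sqrt (hpos i).le]
      push_cast
      ring)
  exact ⟨k, Unitary.star_mul_self_of_mem hk, hΛk.eq.symm, hΩ⟩

/-- Transitivity claim in Theorem 8.1: for `[[A,B],[−B̄,Ā]] ∈ Sp(n)` with
`AA† = 1/2 + Λ`, `Λ` real diagonal with entries in `(−1/2, 1/2)`, the stabilizer
`U(n)_{iΛ}` moves `ABᵗ` to the standard point: `ABᵗ = k·diag(√(1/4−λᵢ²))·kᵗ`. -/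
theorem stmt_9 (n : ℕ) (A B : Matrix (Fin n) (Fin n) ℂ)
    (h1 : Aᴴ * A + Bᵀ * B.map (starRingEnd ℂ) = 1)
    (h2 : Aᴴ * B = Bᵀ * A.map (starRingEnd ℂ))
    (h3 : A * Aᴴ + B * Bᴴ = 1)
    (h4 : A * Bᵀ = B * Aᵀ)
    (l : Fin n → ℝ) (hl : ∀ i, -(1/2) < l i ∧ l i < 1/2)
    (hAA : A * Aᴴ = (1/2 : ℂ) • 1 + Matrix.diagonal (fun i => (l i : ℂ))) :
    ∃ k : Matrix (Fin n) (Fin n) ℂ,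
      kᴴ * k = 1 ∧
      k * Matrix.diagonal (fun i => (l i : ℂ)) =
        Matrix.diagonal (fun i => (l i : ℂ)) * k ∧
      A * Bᵀ = k * Matrix.diagonal (fun i => (Real.sqrt (1/4 - (l i) ^ 2) : ℂ)) * kᵀ :=
  stmt_9_general n A B h1 h2 h4 l hl hAA
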